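/- Let u : ℝⁿ → ℝᵖ, w : ℝᵐ → ℝ^q, h : ℝᵖ × ℝ^q → ℝ all be twice continuously differentiable, with ℓ(zx,zy) = h(u(zx), w(zy)). Suppose at (zx*, zy*): ∇_{zx} ℓ = 0, ∇_{zy} ℓ = 0, the Hessian ∂²ℓ/∂zx² is negative semidefinite, ∂²ℓ/∂zy² is positive semidefinite, and both Jacobians Du(zx*), Dw(zy*) are surjective linear maps. Then at the point (u*, w*) = (u(zx*), w(zy*)): ∇_u h = 0, ∇_w h = 0, ∂²h/∂u² is negative semidefinite, and ∂²h/∂w² is positive semidefinite. -/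

import Mathlib

/-! Both saddle conditions transfer along the chain rule. The first derivative of `h ∘ u` is
`Dh(u zx) ∘ Du(zx)`, so it vanishes iff `Dh(u zx)` vanishes on the range of `Du(zx)`, which is
everything. Differentiating once more, the term `Dh(u zx) ∘ D²u(zx)` drops out at a critical
point, leaving `D²(h ∘ u)(zx) v v = D²h(u zx) (Du v) (Du v)`; surjectivity of `Du(zx)` then
lets `Du v` range over all directions, so the sign condition transfers as well. -/

section ChainRule

variable {D E G : Type*} [NormedAddCommGroup D] [NormedSpace ℝ D]
  [NormedAddCommGroup E] [NormedSpace ℝ E] [NormedAddCommGroup G] [NormedSpace ℝ G]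

lemma fderiv_eq_zero_of_fderiv_comp_eq_zero {F : E → G} {u : D → E} {x : D}
    (hF : DifferentiableAt ℝ F (u x)) (hu : DifferentiableAt ℝ u x)
    (hsurj : Function.Surjective (fderiv ℝ u x))
    (hcomp : fderiv ℝ (fun x' => F (u x')) x = 0) : fderiv ℝ F (u x) = 0 := by
  ext1 a
  obtain ⟨v, rfl⟩ := hsurj a
  rw [← ContinuousLinearMap.comp_apply, ← fderiv_fun_comp x hF hu, hcomp]
  rfl

lemma fderiv_fderiv_comp_apply_of_fderiv_eq_zero {F : E → G} {u : D → E}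
    (hF : ContDiff ℝ 2 F) (hu : ContDiff ℝ 2 u) {x : D} (hcrit : fderiv ℝ F (u x) = 0)
    (v v' : D) :
    fderiv ℝ (fun x' => fderiv ℝ (fun x'' => F (u x'')) x') x v v' =
      fderiv ℝ (fderiv ℝ F) (u x) (fderiv ℝ u x v) (fderiv ℝ u x v') := by
  have hF₁ : Differentiable ℝ F := hF.differentiable (by norm_num)
  have hu₁ : Differentiable ℝ u := hu.differentiable (by norm_num)
  have hDF : Differentiable ℝ (fderiv ℝ F) :=
    (hF.fderiv_right (m := 1) (by norm_num)).differentiable one_ne_zero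
  have hDu : Differentiable ℝ (fderiv ℝ u) :=
    (hu.fderiv_right (m := 1) (by norm_num)).differentiable one_ne_zero
  have chain : (fun x' => fderiv ℝ (fun x'' => F (u x'')) x') =
      fun x' => (fderiv ℝ F (u x')).comp (fderiv ℝ u x') :=
    funext fun x' => fderiv_fun_comp x' (hF₁ _) (hu₁ x')
  have hDFu : DifferentiableAt ℝ (fun x' => fderiv ℝ F (u x')) x := (hDF _).comp x (hu₁ x)
  rw [chain, fderiv_clm_comp hDFu (hDu x), fderiv_fun_comp x (hDF _) (hu₁ x)]
  -- the remaining term `DF(u x) ∘ D²u(x)` vanishes at the critical point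
  simp [hcrit]

end ChainRule

/-- Full Proposition 1 (disentangled case). For `ℓ (zx, zy) = h (u zx, w zy)`
with everything C², if `(zx⋆, zy⋆)` is a second-order saddle point of `ℓ` (vanishing partial
gradients, NSD Hessian in `zx`, PSD Hessian in `zy`) and the Jacobians `Du (zx⋆)`, `Dw (zy⋆)`
are surjective, then `(u zx⋆, w zy⋆)` is a second-order saddle point of `h`. -/
theorem stmt_6 {n m p q : ℕ}
    (u : (Fin n → ℝ) → (Fin p → ℝ)) (w : (Fin m → ℝ) → (Fin q → ℝ))
    (h : (Fin p → ℝ) × (Fin q → ℝ) → ℝ)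
    (hu : ContDiff ℝ 2 u) (hw : ContDiff ℝ 2 w) (hh : ContDiff ℝ 2 h)
    (ℓ : (Fin n → ℝ) × (Fin m → ℝ) → ℝ) (hℓ : ℓ = fun z => h (u z.1, w z.2))
    (zx : Fin n → ℝ) (zy : Fin m → ℝ)
    (hcrit₁ : fderiv ℝ (fun x => ℓ (x, zy)) zx = 0)
    (hcrit₂ : fderiv ℝ (fun y => ℓ (zx, y)) zy = 0)
    (hnsd : ∀ v : Fin n → ℝ,
      fderiv ℝ (fun x => fderiv ℝ (fun x' => ℓ (x', zy)) x) zx v v ≤ 0)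
    (hpsd : ∀ v : Fin m → ℝ,
      0 ≤ fderiv ℝ (fun y => fderiv ℝ (fun y' => ℓ (zx, y')) y) zy v v)
    (hsurju : Function.Surjective (fderiv ℝ u zx))
    (hsurjw : Function.Surjective (fderiv ℝ w zy)) :
    fderiv ℝ (fun u' => h (u', w zy)) (u zx) = 0 ∧
    fderiv ℝ (fun w' => h (u zx, w')) (w zy) = 0 ∧
    (∀ a : Fin p → ℝ,
      fderiv ℝ (fun u' => fderiv ℝ (fun u'' => h (u'', w zy)) u') (u zx) a a ≤ 0) ∧
    (∀ b : Fin q → ℝ,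
      0 ≤ fderiv ℝ (fun w' => fderiv ℝ (fun w'' => h (u zx, w'')) w') (w zy) b b) := by
  subst hℓ
  have hF : ContDiff ℝ 2 (fun u' => h (u', w zy)) := hh.comp (contDiff_id.prodMk contDiff_const)
  have hG : ContDiff ℝ 2 (fun w' => h (u zx, w')) := hh.comp (contDiff_const.prodMk contDiff_id)
  have hF₀ := fderiv_eq_zero_of_fderiv_comp_eq_zero (hF.differentiable (by norm_num) _)
    (hu.differentiable (by norm_num) zx) hsurju hcrit₁
  have hG₀ := fderiv_eq_zero_of_fderiv_comp_eq_zero (hG.differentiable (by norm_num) _)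
    (hw.differentiable (by norm_num) zy) hsurjw hcrit₂
  refine ⟨hF₀, hG₀, fun a => ?_, fun b => ?_⟩
  · obtain ⟨v, rfl⟩ := hsurju a
    rw [← fderiv_fderiv_comp_apply_of_fderiv_eq_zero hF hu hF₀]
    exact hnsd v
  · obtain ⟨v, rfl⟩ := hsurjw b
    rw [← fderiv_fderiv_comp_apply_of_fderiv_eq_zero hG hw hG₀]
    exact hpsd v
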